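/- A nonzero real number z is an eigenvalue of the monodromy of an n-periodic properly bounded difference operator D if and only if z⁻¹ is an eigenvalue of the monodromy of the dual operator D*. -/

import Mathlib

/-- The space of `z`-quasiperiodic bi-infinite real sequences: `ξ_{k+n} = z ξ_k`. -/
def quasiPeriodic (n : ℕ) (z : ℝ) : Submodule ℝ (ℤ → ℝ) where
  carrier := {ξ | ∀ k : ℤ, ξ (k + n) = z * ξ k}
  add_mem' := by
    intro ξ η hξ hη k
    simp only [Pi.add_apply, hξ k, hη k]
    ring
  zero_mem' := by intro k; simp
  smul_mem' := by
    intro c ξ hξ k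
    simp only [Pi.smul_apply, smul_eq_mul, hξ k]
    ring

/-- The difference operator `(Dξ)_k = Σ_{j=m}^{m+d} a_k^j ξ_{k+j}`. -/
def diffOp (m : ℤ) (d : ℕ) (a : ℤ → ℤ → ℝ) : (ℤ → ℝ) →ₗ[ℝ] (ℤ → ℝ) where
  toFun ξ := fun k => ∑ i ∈ Finset.range (d + 1), a k (m + i) * ξ (k + (m + i))
  map_add' ξ η := by
    funext k
    simp [Pi.add_apply, mul_add, Finset.sum_add_distrib]
  map_smul' c ξ := by
    funext k
    simp only [Pi.smul_apply, smul_eq_mul, RingHom.id_apply, Finset.mul_sum]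
    exact Finset.sum_congr rfl fun i _ => by ring

/-- The dual difference operator `(D*ξ)_k = Σ_{j=m}^{m+d} a_{k-j}^j ξ_{k-j}`. -/
def diffOpDual (m : ℤ) (d : ℕ) (a : ℤ → ℤ → ℝ) : (ℤ → ℝ) →ₗ[ℝ] (ℤ → ℝ) where
  toFun ξ := fun k => ∑ i ∈ Finset.range (d + 1), a (k - (m + i)) (m + i) * ξ (k - (m + i))
  map_add' ξ η := by
    funext k
    simp [Pi.add_apply, mul_add, Finset.sum_add_distrib]
  map_smul' c ξ := by
    funext k
    simp only [Pi.smul_apply, smul_eq_mul, RingHom.id_apply, Finset.mul_sum]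
    exact Finset.sum_congr rfl fun i _ => by ring

/-!
The monodromy eigenvectors for `z` are the kernel of `D` restricted to the `n`-dimensional space
`Q_z` of `z`-quasiperiodic sequences, and similarly for `D*` on `Q_{z⁻¹}`. The pairing
`⟨ξ, η⟩ = Σ_{k<n} ξ_k η_k` between `Q_z` and `Q_{z⁻¹}` is nondegenerate, and because the summands
`a_k^j ξ_{k+j} η_k` are `n`-periodic in `k`, shifting the summation index by `j` gives
`⟨Dξ, η⟩ = ⟨ξ, D*η⟩`. Thus the two restrictions are transposes of each other, so one is injective
iff the other is.
-/

open Finset Function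

open scoped Fin.IntCast

theorem Function.Periodic.sum_range_comp_add {M : Type*} [AddCancelCommMonoid M] {f : ℤ → M}
    {n : ℕ} (hf : Periodic f n) (c : ℤ) :
    ∑ k ∈ range n, f (k + c) = ∑ k ∈ range n, f k := by
  have step : ∀ c : ℤ, ∑ k ∈ range n, f (k + (c + 1)) = ∑ k ∈ range n, f (k + c) := by
    intro c
    apply add_right_cancel (b := f c)
    calc ∑ k ∈ range n, f (k + (c + 1)) + f c = ∑ k ∈ range (n + 1), f (k + c) := by
          rw [sum_range_succ']; push_cast; simp only [zero_add, add_assoc, add_comm 1 c]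
      _ = ∑ k ∈ range n, f (k + c) + f c := by rw [sum_range_succ, add_comm (n : ℤ), hf c]
  induction c using Int.induction_on with
  | zero => simp
  | succ c ih => rw [step, ih]
  | pred c ih => rw [← ih, ← step, sub_add_cancel]

theorem LinearMap.exists_ne_zero_mem_apply_eq_zero_iff {R M : Type*} [Ring R] [AddCommGroup M]
    [Module R M] (f : M →ₗ[R] M) {p : Submodule R M} (hp : ∀ x ∈ p, f x ∈ p) :
    (∃ x, x ≠ 0 ∧ x ∈ p ∧ f x = 0) ↔ ¬Injective (f.restrict hp) := by
  rw [← LinearMap.ker_eq_bot, ← ne_eq, Submodule.ne_bot_iff]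
  constructor
  · rintro ⟨x, hx0, hxp, hfx⟩
    exact ⟨⟨x, hxp⟩, Subtype.ext hfx, fun h => hx0 (congrArg Subtype.val h)⟩
  · rintro ⟨x, hfx, hx0⟩
    exact ⟨x, fun h => hx0 (Subtype.ext h), x.2, congrArg Subtype.val hfx⟩

theorem LinearMap.injective_of_injective_of_adjoint {K V W : Type*} [Field K] [AddCommGroup V]
    [Module K V] [FiniteDimensional K V] [AddCommGroup W] [Module K W]
    {B : V →ₗ[K] W →ₗ[K] K} (hB : B.SeparatingRight) {f : V →ₗ[K] V} {g : W →ₗ[K] W}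
    (hfg : ∀ v w, B (f v) w = B v (g w)) (hf : Injective f) : Injective g := by
  rw [← LinearMap.ker_eq_bot, LinearMap.ker_eq_bot']
  intro w hw
  refine hB w fun u => ?_
  obtain ⟨v, rfl⟩ := LinearMap.injective_iff_surjective.mp hf u
  rw [hfg, hw, map_zero]

theorem LinearMap.injective_iff_of_adjoint {K V W : Type*} [Field K] [AddCommGroup V]
    [Module K V] [FiniteDimensional K V] [AddCommGroup W] [Module K W] [FiniteDimensional K W]
    {B : V →ₗ[K] W →ₗ[K] K} (hB : B.Nondegenerate) {f : V →ₗ[K] V} {g : W →ₗ[K] W}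
    (hfg : ∀ v w, B (f v) w = B v (g w)) : Injective f ↔ Injective g :=
  ⟨injective_of_injective_of_adjoint hB.2 hfg,
    injective_of_injective_of_adjoint (B := B.flip) (flip_separatingRight.mpr hB.1)
      fun w v => (hfg v w).symm⟩

namespace quasiPeriodic

variable {n : ℕ} {z : ℝ} {ξ : ℤ → ℝ}

theorem apply_add_mul (hz : z ≠ 0) (hξ : ξ ∈ quasiPeriodic n z) (k q : ℤ) :
    ξ (k + q * n) = z ^ q * ξ k := by
  induction q using Int.induction_on with
  | zero => simp
  | succ q ih => rw [add_one_mul, ← add_assoc, hξ, ih, zpow_add_one₀ hz, mul_assoc, mul_left_comm]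
  | pred q ih =>
    have h := hξ (k + (-q - 1) * n)
    rw [add_assoc, ← add_one_mul, sub_add_cancel, ih] at h
    rw [zpow_sub_one₀ hz, mul_comm _ z⁻¹, mul_assoc, h, inv_mul_cancel_left₀ hz]

def restrictFin (n : ℕ) (z : ℝ) : quasiPeriodic n z →ₗ[ℝ] (Fin n → ℝ) :=
  (LinearMap.funLeft ℝ ℝ fun i : Fin n => ((i : ℕ) : ℤ)).comp (quasiPeriodic n z).subtype

/-- The cast `(k : Fin n)` reduces `k` modulo `n`. -/
noncomputable def extend (n : ℕ) [NeZero n] (z : ℝ) (v : Fin n → ℝ) : ℤ → ℝ :=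
  fun k => z ^ (k / n) * v k

section

variable [NeZero n]

theorem coe_val_intCast (k : ℤ) : (((k : Fin n) : ℕ) : ℤ) = k % n := by
  rw [Fin.val_intCast,
    Int.toNat_of_nonneg (Int.emod_nonneg _ (NeZero.ne _ |> Nat.cast_ne_zero.mpr))]

theorem intCast_coe_val (i : Fin n) : (((i : ℕ) : ℤ) : Fin n) = i :=
  Fin.ext <| by simp [Int.emod_eq_of_lt]

theorem extend_mem (hz : z ≠ 0) (v : Fin n → ℝ) : extend n z v ∈ quasiPeriodic n z := by
  intro k
  have hdiv : (k + n) / n = k / n + 1 := by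
    rw [Int.add_ediv_of_dvd_right dvd_rfl, Int.ediv_self (NeZero.ne _ |> Nat.cast_ne_zero.mpr)]
  have hcast : (((k + n : ℤ)) : Fin n) = (k : Fin n) := Fin.ext <| by
    apply Nat.cast_injective (R := ℤ)
    rw [coe_val_intCast, coe_val_intCast, Int.add_emod_right]
  simp only [extend, hdiv, hcast, zpow_add_one₀ hz]
  ring

theorem restrictFin_injective (hz : z ≠ 0) : Injective (restrictFin n z) := by
  rw [← LinearMap.ker_eq_bot, LinearMap.ker_eq_bot']
  rintro ⟨ξ, hξ⟩ h0
  ext k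
  have hk := apply_add_mul hz hξ (k % n) (k / n)
  rw [Int.emod_add_ediv_mul, ← coe_val_intCast] at hk
  have h1 : ξ (((k : Fin n) : ℕ) : ℤ) = 0 := congrFun h0 (k : Fin n)
  show ξ k = 0
  rw [hk, h1, mul_zero]

theorem restrictFin_surjective (hz : z ≠ 0) : Surjective (restrictFin n z) := by
  intro v
  refine ⟨⟨extend n z v, extend_mem hz v⟩, funext fun i => ?_⟩
  have hdiv : ((i : ℕ) : ℤ) / n = 0 :=
    Int.ediv_eq_zero_of_lt (by positivity) (by exact_mod_cast i.2)
  simp [restrictFin, LinearMap.funLeft, extend, hdiv, intCast_coe_val]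

theorem finiteDimensional (hz : z ≠ 0) : FiniteDimensional ℝ (quasiPeriodic n z) :=
  FiniteDimensional.of_injective _ (restrictFin_injective hz)

end

variable {w : ℝ}

def pairing (n : ℕ) (z w : ℝ) : quasiPeriodic n z →ₗ[ℝ] quasiPeriodic n w →ₗ[ℝ] ℝ :=
  (dotProductBilin ℝ ℝ).compl₁₂ (restrictFin n z) (restrictFin n w)

theorem pairing_apply (ξ : quasiPeriodic n z) (η : quasiPeriodic n w) :
    pairing n z w ξ η = ∑ k ∈ range n, (ξ : ℤ → ℝ) k * (η : ℤ → ℝ) k := by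
  simp [pairing, restrictFin, dotProduct, Fin.sum_univ_eq_sum_range (fun k => ξ.1 k * η.1 k)]

theorem pairing_flip : (pairing n z w).flip = pairing n w z := by
  ext
  simp [pairing, dotProduct_comm]

variable [NeZero n]

theorem pairing_separatingLeft (hz : z ≠ 0) (hw : w ≠ 0) : (pairing n z w).SeparatingLeft := by
  intro ξ hξ
  apply restrictFin_injective hz
  rw [map_zero]
  refine dotProduct_eq_zero _ fun v => ?_
  obtain ⟨η, rfl⟩ := restrictFin_surjective hw v
  exact hξ η

theorem pairing_nondegenerate (hz : z ≠ 0) (hw : w ≠ 0) : (pairing n z w).Nondegenerate :=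
  ⟨pairing_separatingLeft hz hw, by
    rw [← LinearMap.flip_separatingLeft, pairing_flip]
    exact pairing_separatingLeft hw hz⟩

end quasiPeriodic

section DifferenceOperator

variable {n : ℕ} {m : ℤ} {d : ℕ} {a : ℤ → ℤ → ℝ} {z : ℝ} {ξ η : ℤ → ℝ}

theorem diffOp_mem_quasiPeriodic (hper : ∀ k j : ℤ, a (k + n) j = a k j)
    (hξ : ξ ∈ quasiPeriodic n z) : diffOp m d a ξ ∈ quasiPeriodic n z := by
  intro k
  simp only [diffOp, LinearMap.coe_mk, AddHom.coe_mk, mul_sum]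
  refine sum_congr rfl fun i _ => ?_
  rw [add_right_comm, hξ, hper, mul_left_comm]

theorem diffOpDual_mem_quasiPeriodic (hper : ∀ k j : ℤ, a (k + n) j = a k j)
    (hη : η ∈ quasiPeriodic n z) : diffOpDual m d a η ∈ quasiPeriodic n z := by
  intro k
  simp only [diffOpDual, LinearMap.coe_mk, AddHom.coe_mk, mul_sum]
  refine sum_congr rfl fun i _ => ?_
  rw [add_sub_right_comm, hη, hper, mul_left_comm]

theorem sum_range_diffOp_mul (hper : ∀ k j : ℤ, a (k + n) j = a k j) (hz : z ≠ 0)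
    (hξ : ξ ∈ quasiPeriodic n z) (hη : η ∈ quasiPeriodic n z⁻¹) :
    ∑ k ∈ range n, diffOp m d a ξ k * η k = ∑ k ∈ range n, ξ k * diffOpDual m d a η k := by
  simp only [diffOp, diffOpDual, LinearMap.coe_mk, AddHom.coe_mk, sum_mul, mul_sum]
  rw [sum_comm, sum_comm (s := range n)]
  refine sum_congr rfl fun i _ => ?_
  set j := m + i
  have hperiodic : Periodic (fun k => a k j * ξ (k + j) * η k) n := fun k => by
    dsimp only
    rw [add_right_comm, hξ, hη, hper]
    field_simp
  rw [← hperiodic.sum_range_comp_add (-j)]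
  refine sum_congr rfl fun k _ => ?_
  simp only [← sub_eq_add_neg, sub_add_cancel]
  ring

end DifferenceOperator

theorem eigenvalue_monodromy_dual_general (n : ℕ) (hn : 1 ≤ n) (m : ℤ) (d : ℕ) (a : ℤ → ℤ → ℝ)
    (hper : ∀ k j : ℤ, a (k + n) j = a k j)
    (z : ℝ) (hz : z ≠ 0) :
    (∃ ξ : ℤ → ℝ, ξ ≠ 0 ∧ ξ ∈ quasiPeriodic n z ∧ diffOp m d a ξ = 0) ↔
      (∃ η : ℤ → ℝ, η ≠ 0 ∧ η ∈ quasiPeriodic n z⁻¹ ∧ diffOpDual m d a η = 0) := by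
  have : NeZero n := ⟨by omega⟩
  have := quasiPeriodic.finiteDimensional (n := n) hz
  have := quasiPeriodic.finiteDimensional (n := n) (inv_ne_zero hz)
  rw [LinearMap.exists_ne_zero_mem_apply_eq_zero_iff _ fun ξ => diffOp_mem_quasiPeriodic hper,
    LinearMap.exists_ne_zero_mem_apply_eq_zero_iff _ fun η => diffOpDual_mem_quasiPeriodic hper,
    not_iff_not]
  refine LinearMap.injective_iff_of_adjoint
    (quasiPeriodic.pairing_nondegenerate hz (inv_ne_zero hz)) fun ξ η => ?_
  simpa only [quasiPeriodic.pairing_apply, LinearMap.coe_restrict_apply] using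
    sum_range_diffOp_mul hper hz ξ.2 η.2

/-- A nonzero real `z` is an eigenvalue of the monodromy of an `n`-periodic properly
bounded difference operator `D` iff `z⁻¹` is an eigenvalue of the monodromy of `D*`. -/
theorem eigenvalue_monodromy_dual (n : ℕ) (hn : 1 ≤ n) (m : ℤ) (d : ℕ) (a : ℤ → ℤ → ℝ)
    (hper : ∀ k j : ℤ, a (k + n) j = a k j)
    (hlow : ∀ k, a k m ≠ 0) (hhigh : ∀ k, a k (m + d) ≠ 0)
    (z : ℝ) (hz : z ≠ 0) :
    (∃ ξ : ℤ → ℝ, ξ ≠ 0 ∧ ξ ∈ quasiPeriodic n z ∧ diffOp m d a ξ = 0) ↔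
      (∃ η : ℤ → ℝ, η ≠ 0 ∧ η ∈ quasiPeriodic n z⁻¹ ∧ diffOpDual m d a η = 0) :=
  eigenvalue_monodromy_dual_general n hn m d a hper z hz
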